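/- arXiv:1806.10510 — 3 statements merged into one kernel-verified Lean document; each statement's English description precedes it below -/
import Mathlib

section
/- For every complex z with |z| < 1, ∏_{k≥1} (1 + (-1)^k z² / k²) = (sinh(πz/2)/(πz/2)) · cos(πz/2). -/
open Filter Finset Complex Topology

private lemma pe_term_norm (z : ℂ) (n : ℕ) :
    ‖(-1 : ℂ) ^ (n+1) * z ^ 2 / ((n : ℂ)+1) ^ 2‖ = ‖z‖^2 * (1/((n:ℝ)+1)^2) := by
  rw [norm_div, norm_mul, norm_pow, norm_pow, norm_neg, norm_one, one_pow, one_mul, norm_pow]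
  have h1 : ‖(n : ℂ) + 1‖ = (n : ℝ) + 1 := by norm_cast
  rw [h1, div_eq_mul_one_div]

private lemma pe_termlt (w : ℂ) (hw : ‖w‖ < 1) (j : ℕ) : ‖w^2/((j:ℂ)+1)^2‖ < 1 := by
  rw [norm_div, norm_pow, norm_pow]
  have h1 : ‖(j : ℂ) + 1‖ = (j : ℝ) + 1 := by norm_cast
  rw [h1]
  have h2 : (1:ℝ) ≤ ((j:ℝ)+1)^2 := by nlinarith [Nat.cast_nonneg (α := ℝ) j]
  have h3 : ‖w‖^2 < 1 := by nlinarith [norm_nonneg w]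
  calc ‖w‖^2 / ((j:ℝ)+1)^2 ≤ ‖w‖^2 / 1 := by
        apply div_le_div_of_nonneg_left (sq_nonneg _) one_pos h2 |>.trans_eq rfl
    _ < 1 := by simpa using h3

private lemma pe_one_add_ne (u : ℂ) (h : ‖u‖ < 1) : (1 : ℂ) + u ≠ 0 := by
  intro he
  have : u = -1 := by linear_combination he
  rw [this] at h
  simp at h

private lemma pe_one_sub_ne (u : ℂ) (h : ‖u‖ < 1) : (1 : ℂ) - u ≠ 0 := by
  have := pe_one_add_ne (-u) (by simpa using h)
  simpa [sub_eq_add_neg] using this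

private lemma pe_term_norm_lt (z : ℂ) (hz : ‖z‖ < 1) (n : ℕ) :
    ‖(-1 : ℂ) ^ (n+1) * z ^ 2 / ((n : ℂ)+1) ^ 2‖ < 1 := by
  rw [pe_term_norm]
  have h2 : (1:ℝ)/((n:ℝ)+1)^2 ≤ 1 := by
    rw [div_le_one (by positivity)]
    nlinarith [Nat.cast_nonneg (α := ℝ) n]
  have h3 : ‖z‖^2 < 1 := by nlinarith [norm_nonneg z]
  nlinarith [norm_nonneg z, sq_nonneg ‖z‖, pow_pos (show (0:ℝ) < (n:ℝ)+1 by positivity) 2]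

private lemma pe_summable_log (z : ℂ) (hz : ‖z‖ < 1) :
    Summable (fun n : ℕ => Complex.log (1 + (-1 : ℂ) ^ (n+1) * z ^ 2 / ((n : ℂ)+1) ^ 2)) := by
  set r := ‖z‖^2 with hr
  have hr1 : r < 1 := by nlinarith [norm_nonneg z]
  have hr0 : 0 ≤ r := sq_nonneg _
  apply Summable.of_norm_bounded (g := fun n : ℕ => (r * (1-r)⁻¹/2 + 1) * (r * (1/((n:ℝ)+1)^2)))
  · apply Summable.mul_left
    apply Summable.mul_left
    have := (summable_nat_add_iff 1).mpr (Real.summable_one_div_nat_pow.mpr one_lt_two)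
    simpa using this
  · intro n
    set w := (-1 : ℂ) ^ (n+1) * z ^ 2 / ((n : ℂ)+1) ^ 2 with hw
    have hwn : ‖w‖ = r * (1/((n:ℝ)+1)^2) := pe_term_norm z n
    have hwlt : ‖w‖ < 1 := pe_term_norm_lt z hz n
    have hwr : ‖w‖ ≤ r := by
      rw [hwn]
      have h2 : (1:ℝ)/((n:ℝ)+1)^2 ≤ 1 := by
        rw [div_le_one (by positivity)]
        nlinarith [Nat.cast_nonneg (α := ℝ) n]
      nlinarith
    calc ‖Complex.log (1 + w)‖ ≤ ‖w‖^2 * (1-‖w‖)⁻¹/2 + ‖w‖ :=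
            Complex.norm_log_one_add_le hwlt
      _ ≤ ‖w‖ * r * (1-r)⁻¹/2 + ‖w‖ := by
            have ha : ‖w‖^2 ≤ ‖w‖ * r := by nlinarith [norm_nonneg w]
            have hb : (1-‖w‖)⁻¹ ≤ (1-r)⁻¹ := by
              apply inv_anti₀ (by linarith) (by linarith)
            have hinv0 : (0:ℝ) ≤ (1-‖w‖)⁻¹ := by
              have : (0:ℝ) < 1 - ‖w‖ := by linarith
              positivity
            have := mul_le_mul ha hb hinv0 (by positivity : (0:ℝ) ≤ ‖w‖ * r)
            linarith
      _ = (r * (1-r)⁻¹/2 + 1) * ‖w‖ := by ring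
      _ = (r * (1-r)⁻¹/2 + 1) * (r * (1/((n:ℝ)+1)^2)) := by rw [hwn]

private lemma pe_aux_sin (w : ℂ) (hw : w ≠ 0) :
    Tendsto (fun n : ℕ => ∏ j ∈ Finset.range n, ((1:ℂ) - w^2/((j:ℂ)+1)^2)) atTop
      (𝓝 (Complex.sin ((Real.pi:ℂ)*w) / ((Real.pi:ℂ)*w))) := by
  have hne : ((Real.pi:ℂ)*w) ≠ 0 := by
    simp [Complex.ofReal_ne_zero, Real.pi_ne_zero, hw]
  have h := (Complex.tendsto_euler_sin_prod w).const_mul (((Real.pi:ℂ)*w)⁻¹)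
  simp only [← mul_assoc, inv_mul_cancel₀ hne, one_mul] at h
  convert h using 2
  rw [div_eq_inv_mul]

private lemma pe_prod_even_odd (f : ℕ → ℂ) (m : ℕ) :
    ∏ n ∈ Finset.range (2*m), f n =
      (∏ j ∈ Finset.range m, f (2*j)) * ∏ j ∈ Finset.range m, f (2*j+1) := by
  induction m with
  | zero => simp
  | succ m ih =>
    have h : 2*(m+1) = (2*m+1)+1 := by ring
    rw [h, Finset.prod_range_succ, Finset.prod_range_succ, Finset.prod_range_succ,
      Finset.prod_range_succ, ih]
    ring

/-- For `|z| < 1`,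
`∏_{k≥1} (1 + (-1)^k z²/k²) = (sinh(πz/2)/(πz/2)) · cos(πz/2)`,
where the right-hand side is interpreted as `1` at `z = 0`. -/
theorem prod_eq_sinh_cos (z : ℂ) (hz : ‖z‖ < 1) :
    (∏' k : ℕ+, (1 + (-1 : ℂ) ^ (k : ℕ) * z ^ 2 / (k : ℂ) ^ 2)) =
      if z = 0 then 1 else
        Complex.sinh ((Real.pi : ℂ) * z / 2) / ((Real.pi : ℂ) * z / 2) *
          Complex.cos ((Real.pi : ℂ) * z / 2) := by
  by_cases hz0 : z = 0
  · simp [hz0]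
  rw [if_neg hz0]
  set G : ℕ → ℂ := fun n => 1 + (-1 : ℂ) ^ (n+1) * z ^ 2 / ((n : ℂ)+1) ^ 2 with hG
  have htransfer : (∏' k : ℕ+, (1 + (-1 : ℂ) ^ (k : ℕ) * z ^ 2 / (k : ℂ) ^ 2)) = ∏' n : ℕ, G n := by
    rw [← Equiv.tprod_eq Equiv.pnatEquivNat.symm]
    congr 1
    funext n
    simp [Equiv.pnatEquivNat, hG]
  rw [htransfer]
  -- multipliability
  have hGne : ∀ n, G n ≠ 0 := fun n => pe_one_add_ne _ (pe_term_norm_lt z hz n)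
  have hmult : Multipliable G := by
    have := Complex.multipliable_of_summable_log (f := G) (pe_summable_log z hz)
    exact this
  have hT : Tendsto (fun N => ∏ n ∈ Finset.range N, G n) atTop (𝓝 (∏' n, G n)) :=
    hmult.hasProd.tendsto_prod_nat
  have h2m : Tendsto (fun m : ℕ => 2*m) atTop atTop :=
    tendsto_id.const_mul_atTop' zero_lt_two
  have hTsub : Tendsto (fun m => ∏ n ∈ Finset.range (2*m), G n) atTop (𝓝 (∏' n, G n)) :=
    hT.comp h2m
  -- the three limits
  have hI2 : Complex.I * z / 2 ≠ 0 := by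
    simp [Complex.I_ne_zero, hz0]
  have hLfullc : Tendsto (fun n : ℕ => ∏ j ∈ Finset.range (2*n), ((1:ℂ) - z^2/((j:ℂ)+1)^2))
      atTop (𝓝 (Complex.sin ((Real.pi:ℂ)*z) / ((Real.pi:ℂ)*z))) :=
    (pe_aux_sin z hz0).comp h2m
  have hLhalf : Tendsto (fun m : ℕ => ∏ j ∈ Finset.range m, ((1:ℂ) - (z/2)^2/((j:ℂ)+1)^2))
      atTop (𝓝 (Complex.sin ((Real.pi:ℂ)*(z/2)) / ((Real.pi:ℂ)*(z/2)))) :=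
    pe_aux_sin (z/2) (by simpa using hz0)
  have hLE : Tendsto (fun m : ℕ => ∏ j ∈ Finset.range m, ((1:ℂ) - (Complex.I*z/2)^2/((j:ℂ)+1)^2))
      atTop (𝓝 (Complex.sin ((Real.pi:ℂ)*(Complex.I*z/2)) / ((Real.pi:ℂ)*(Complex.I*z/2)))) :=
    pe_aux_sin _ hI2
  -- sin(πz/2) ≠ 0
  have hπ : ((Real.pi:ℂ)) ≠ 0 := by simpa using Real.pi_ne_zero
  have hs : Complex.sin ((Real.pi:ℂ) * z / 2) ≠ 0 := by
    intro h
    rw [Complex.sin_eq_zero_iff] at h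
    obtain ⟨k, hk⟩ := h
    have hzk : z = 2 * k := by
      have h2 : (Real.pi:ℂ) * z = (Real.pi:ℂ) * (2*k) := by linear_combination 2*hk
      exact mul_left_cancel₀ hπ h2
    have hn : ‖z‖ = 2 * |(k:ℝ)| := by
      rw [hzk, norm_mul]
      rw [show ((k:ℂ)) = ((k:ℝ):ℂ) by push_cast; ring, Complex.norm_real]
      simp [Real.norm_eq_abs]
    have hk0 : k = 0 := by
      have := hn ▸ hz
      have hab : |(k:ℝ)| < 1/2 := by linarith [abs_nonneg (k:ℝ)]
      by_contra hne
      have : (1:ℝ) ≤ |(k:ℝ)| := by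
        have : (1:ℤ) ≤ |k| := by rcases abs_cases k with ⟨h1,h2⟩|⟨h1,h2⟩ <;> omega
        calc (1:ℝ) ≤ (|k| : ℤ) := by exact_mod_cast this
          _ = |(k:ℝ)| := by push_cast; simp
      linarith
    rw [hk0] at hzk
    simp at hzk
    exact hz0 hzk
  have hLhalf_ne : Complex.sin ((Real.pi:ℂ)*(z/2)) / ((Real.pi:ℂ)*(z/2)) ≠ 0 := by
    apply div_ne_zero
    · convert hs using 2; ring
    · simp [hπ, hz0]
  -- pointwise identity
  have hShalf_ne : ∀ m, (∏ j ∈ Finset.range m, ((1:ℂ) - (z/2)^2/((j:ℂ)+1)^2)) ≠ 0 := by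
    intro m
    apply Finset.prod_ne_zero_iff.mpr
    intro j _
    exact pe_one_sub_ne _ (pe_termlt (z/2) (by calc ‖z/2‖ = ‖z‖/2 := by simp
                                                  _ < 1 := by linarith [norm_nonneg z]) j)
  have hkey : ∀ m : ℕ, ∏ n ∈ Finset.range (2*m), G n =
      (∏ j ∈ Finset.range m, ((1:ℂ) - (Complex.I*z/2)^2/((j:ℂ)+1)^2)) *
        ((∏ j ∈ Finset.range (2*m), ((1:ℂ) - z^2/((j:ℂ)+1)^2)) /
          (∏ j ∈ Finset.range m, ((1:ℂ) - (z/2)^2/((j:ℂ)+1)^2))) := by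
    intro m
    have hcj : ∀ j : ℕ, ((j:ℂ)+1) ≠ 0 := fun j => Nat.cast_add_one_ne_zero j
    have hG_even : ∀ j : ℕ, G (2*j) = (1:ℂ) - z^2/(((2*j:ℕ):ℂ)+1)^2 := by
      intro j
      simp only [hG]
      have : (-1 : ℂ) ^ (2*j+1) = -1 := by simp [pow_succ, pow_mul]
      rw [this]
      ring
    have hG_odd : ∀ j : ℕ, G (2*j+1) = (1:ℂ) - (Complex.I*z/2)^2/((j:ℂ)+1)^2 := by
      intro j
      simp only [hG]
      have h1 : (-1 : ℂ) ^ (2*j+1+1) = 1 := by simp [pow_succ, pow_mul]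
      rw [h1]
      have h2 : (((2*j+1:ℕ)):ℂ) + 1 = 2*((j:ℂ)+1) := by push_cast; ring
      have h3 : (Complex.I*z/2)^2 = -(z^2)/4 := by
        rw [div_pow, mul_pow, Complex.I_sq]; ring
      rw [h2, h3]
      have := hcj j
      field_simp
      ring
    have hH_odd : ∀ j : ℕ, (1:ℂ) - z^2/(((2*j+1:ℕ):ℂ)+1)^2 = (1:ℂ) - (z/2)^2/((j:ℂ)+1)^2 := by
      intro j
      have h2 : (((2*j+1:ℕ)):ℂ) + 1 = 2*((j:ℂ)+1) := by push_cast; ring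
      rw [h2, div_pow, mul_pow]
      have := hcj j
      field_simp
    rw [pe_prod_even_odd]
    have he : ∀ j ∈ Finset.range m, G (2*j+1) = (1:ℂ) - (Complex.I*z/2)^2/((j:ℂ)+1)^2 :=
      fun j _ => hG_odd j
    rw [Finset.prod_congr rfl he]
    have hSfull : (∏ j ∈ Finset.range (2*m), ((1:ℂ) - z^2/((j:ℂ)+1)^2)) =
        (∏ j ∈ Finset.range m, G (2*j)) *
          (∏ j ∈ Finset.range m, ((1:ℂ) - (z/2)^2/((j:ℂ)+1)^2)) := by
      rw [pe_prod_even_odd]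
      congr 1
      · exact Finset.prod_congr rfl (fun j _ => (hG_even j).symm)
      · exact Finset.prod_congr rfl (fun j _ => hH_odd j)
    rw [hSfull, mul_div_cancel_right₀ _ (hShalf_ne m), mul_comm]
  -- combine limits
  have hcomb : Tendsto (fun m => ∏ n ∈ Finset.range (2*m), G n) atTop
      (𝓝 ((Complex.sin ((Real.pi:ℂ)*(Complex.I*z/2)) / ((Real.pi:ℂ)*(Complex.I*z/2))) *
        ((Complex.sin ((Real.pi:ℂ)*z) / ((Real.pi:ℂ)*z)) /
          (Complex.sin ((Real.pi:ℂ)*(z/2)) / ((Real.pi:ℂ)*(z/2)))))) := by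
    have := hLE.mul (hLfullc.div hLhalf hLhalf_ne)
    apply this.congr
    intro m
    exact (hkey m).symm
  have hfinal := tendsto_nhds_unique hTsub hcomb
  rw [hfinal]
  -- final algebra
  have h1 : (Real.pi:ℂ)*(Complex.I*z/2) = ((Real.pi:ℂ)*z/2) * Complex.I := by ring
  have h2 : (Real.pi:ℂ)*z = 2 * ((Real.pi:ℂ)*z/2) := by ring
  have h3 : (Real.pi:ℂ)*(z/2) = (Real.pi:ℂ)*z/2 := by ring
  rw [h1, Complex.sin_mul_I, h2, Complex.sin_two_mul, h3]
  have hI : Complex.I ≠ 0 := Complex.I_ne_zero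
  field_simp
end

section
/- For every complex z with 0 < |z| < 1, ∏_{k≥1} (1 - (-1)^k z² / k²)^{-1} = (πz/2) / (sin(πz/2) · cosh(πz/2)). -/
open Filter Finset Complex Topology

namespace ProdInvAux

noncomputable def f (z : ℂ) (n : ℕ) : ℂ := 1 - (-1 : ℂ) ^ (n + 1) * z ^ 2 / ((n : ℂ) + 1) ^ 2
noncomputable def a (z : ℂ) (n : ℕ) : ℂ := 1 - (z / 2) ^ 2 / ((n : ℂ) + 1) ^ 2
noncomputable def s (z : ℂ) (n : ℕ) : ℂ := 1 - (Complex.I * z) ^ 2 / ((n : ℂ) + 1) ^ 2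
noncomputable def d (z : ℂ) (n : ℕ) : ℂ := 1 - (Complex.I * z / 2) ^ 2 / ((n : ℂ) + 1) ^ 2
noncomputable def F (z : ℂ) (n : ℕ) : ℂ := (f z n)⁻¹

lemma ncast_ne (n : ℕ) : ((n : ℂ) + 1) ≠ 0 := by
  exact_mod_cast Nat.cast_add_one_ne_zero (R := ℂ) n

lemma f_even (z : ℂ) (n : ℕ) : f z (2 * n) = s z (2 * n) := by
  simp only [f, s]
  rw [pow_succ, (even_two_mul n).neg_one_pow, mul_pow, Complex.I_sq]
  ring

lemma f_odd (z : ℂ) (n : ℕ) : f z (2 * n + 1) = a z n := by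
  simp only [f, a]
  have h1 : (((2 * n + 1 : ℕ) : ℂ)) + 1 = 2 * ((n : ℂ) + 1) := by push_cast; ring
  have h2 : (-1 : ℂ) ^ (2 * n + 1 + 1) = 1 := by
    have h3 : 2 * n + 1 + 1 = 2 * (n + 1) := by ring
    rw [h3, (even_two_mul (n + 1)).neg_one_pow]
  rw [h1, h2]
  have h3 := ncast_ne n
  field_simp

lemma d_eq (z : ℂ) (n : ℕ) : d z n = s z (2 * n + 1) := by
  simp only [d, s]
  have h1 : (((2 * n + 1 : ℕ) : ℂ)) + 1 = 2 * ((n : ℂ) + 1) := by push_cast; ring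
  rw [h1]
  have h3 := ncast_ne n
  field_simp

lemma key (z : ℂ) (n : ℕ) :
    (∏ k ∈ range (2 * n), f z k) * ∏ m ∈ range n, d z m
      = (∏ m ∈ range n, a z m) * ∏ k ∈ range (2 * n), s z k := by
  induction n with
  | zero => simp
  | succ n ih =>
    have h2 : 2 * (n + 1) = 2 * n + 1 + 1 := by ring
    rw [h2]
    simp only [prod_range_succ]
    rw [f_even, f_odd, d_eq]
    linear_combination (s z (2 * n) * a z n * s z (2 * n + 1)) * ih

lemma one_sub_ne {w : ℂ} (h : ‖w‖ < 1) : (1 : ℂ) - w ≠ 0 := by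
  intro hc
  rw [sub_eq_zero] at hc
  rw [← hc] at h
  simp at h

lemma div_sq_small {w : ℂ} (hw : ‖w‖ < 1) (n : ℕ) : ‖w ^ 2 / ((n : ℂ) + 1) ^ 2‖ < 1 := by
  have h1 : ((n : ℂ) + 1) = ((n + 1 : ℕ) : ℂ) := by push_cast; ring
  rw [norm_div, norm_pow, norm_pow, h1, Complex.norm_natCast]
  have hn : (1 : ℝ) ≤ ((n + 1 : ℕ) : ℝ) := by exact_mod_cast Nat.one_le_iff_ne_zero.mpr (by omega)
  have h2 : ‖w‖ ^ 2 < 1 := by nlinarith [norm_nonneg w]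
  have h3 : (1 : ℝ) ≤ ((n + 1 : ℕ) : ℝ) ^ 2 := by nlinarith
  calc ‖w‖ ^ 2 / ((n + 1 : ℕ) : ℝ) ^ 2 ≤ ‖w‖ ^ 2 := div_le_self (by positivity) h3
    _ < 1 := h2

lemma norm_fsub (z : ℂ) (n : ℕ) :
    ‖(-1 : ℂ) ^ (n + 1) * z ^ 2 / ((n : ℂ) + 1) ^ 2‖ = ‖z ^ 2 / ((n : ℂ) + 1) ^ 2‖ := by
  rw [norm_div, norm_div, norm_mul, norm_pow, norm_neg, norm_one, one_pow, one_mul]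

lemma f_ne (z : ℂ) (hz : ‖z‖ < 1) (n : ℕ) : f z n ≠ 0 := by
  apply one_sub_ne
  rw [norm_fsub]
  exact div_sq_small hz n

lemma s_ne (z : ℂ) (hz : ‖z‖ < 1) (n : ℕ) : s z n ≠ 0 := by
  apply one_sub_ne
  apply div_sq_small
  simpa using hz

lemma a_ne (z : ℂ) (hz : ‖z‖ < 1) (n : ℕ) : a z n ≠ 0 := by
  apply one_sub_ne
  apply div_sq_small
  rw [norm_div]
  simp only [Complex.norm_ofNat]
  nlinarith [norm_nonneg z]

lemma d_ne (z : ℂ) (hz : ‖z‖ < 1) (n : ℕ) : d z n ≠ 0 := by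
  apply one_sub_ne
  apply div_sq_small
  rw [norm_div, norm_mul, Complex.norm_I, one_mul]
  simp only [Complex.norm_ofNat]
  nlinarith [norm_nonneg z]

/-- bound: `‖F z n - 1‖ ≤ C / (n+1)^2` with `C = ‖z‖^2/(1-‖z‖^2)`. -/
lemma F_sub_one_bound (z : ℂ) (hz : ‖z‖ < 1) (n : ℕ) :
    ‖F z n - 1‖ ≤ (‖z‖ ^ 2 / (1 - ‖z‖ ^ 2)) / ((n : ℝ) + 1) ^ 2 := by
  have hr2 : ‖z‖ ^ 2 < 1 := by nlinarith [norm_nonneg z]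
  have hpos : (0 : ℝ) < 1 - ‖z‖ ^ 2 := by linarith
  have hfne := f_ne z hz n
  have h1 : F z n - 1 = (1 - f z n) * (f z n)⁻¹ := by
    field_simp [F]
    simp only [F, sub_mul, inv_mul_cancel₀ hfne, one_mul]
  have h1n : ((n : ℂ) + 1) = ((n + 1 : ℕ) : ℂ) := by push_cast; ring
  have hnr : (1 : ℝ) ≤ ((n : ℝ) + 1) := by
    have h0 : (0:ℝ) ≤ (n:ℝ) := Nat.cast_nonneg n
    linarith
  have hnormsub : ‖1 - f z n‖ = ‖z‖ ^ 2 / ((n : ℝ) + 1) ^ 2 := by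
    simp only [f, sub_sub_cancel]
    rw [norm_fsub, norm_div, norm_pow, norm_pow, h1n, Complex.norm_natCast]
    push_cast; ring
  have hlow : 1 - ‖z‖ ^ 2 ≤ ‖f z n‖ := by
    set w : ℂ := (-1 : ℂ) ^ (n + 1) * z ^ 2 / ((n : ℂ) + 1) ^ 2 with hw
    have hfw : f z n = 1 - w := rfl
    have h2 : ‖(1 : ℂ)‖ - ‖w‖ ≤ ‖(1 : ℂ) - w‖ := norm_sub_norm_le 1 w
    rw [norm_one] at h2
    have h3 : ‖w‖ ≤ ‖z‖ ^ 2 := by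
      rw [hw, norm_fsub, norm_div, norm_pow, norm_pow, h1n, Complex.norm_natCast]
      have h4 : (1 : ℝ) ≤ (((n + 1 : ℕ)) : ℝ) ^ 2 := by push_cast; nlinarith
      exact div_le_self (by positivity) h4
    rw [hfw]
    linarith
  have hfpos : 0 < ‖f z n‖ := norm_pos_iff.mpr hfne
  rw [h1, norm_mul, norm_inv, hnormsub]
  have hne1 : ((n : ℝ) + 1) ^ 2 ≠ 0 := by positivity
  rw [div_div, mul_inv_le_iff₀ hfpos]
  calc ‖z‖ ^ 2 / ((n : ℝ) + 1) ^ 2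
      = (‖z‖ ^ 2 / ((1 - ‖z‖ ^ 2) * ((n : ℝ) + 1) ^ 2)) * (1 - ‖z‖ ^ 2) := by
        rw [mul_comm (1 - ‖z‖ ^ 2) (((n : ℝ) + 1) ^ 2), ← div_div,
          div_mul_cancel₀ _ (ne_of_gt hpos)]
    _ ≤ (‖z‖ ^ 2 / ((1 - ‖z‖ ^ 2) * ((n : ℝ) + 1) ^ 2)) * ‖f z n‖ :=
        mul_le_mul_of_nonneg_left hlow (by positivity)

lemma multipliable_F (z : ℂ) (hz : ‖z‖ < 1) : Multipliable (F z) := by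
  set C : ℝ := ‖z‖ ^ 2 / (1 - ‖z‖ ^ 2) with hC
  have hr2 : ‖z‖ ^ 2 < 1 := by nlinarith [norm_nonneg z]
  have hpos : (0 : ℝ) < 1 - ‖z‖ ^ 2 := by linarith
  have hCnonneg : 0 ≤ C := by rw [hC]; positivity
  set N : ℕ := ⌈2 * C⌉₊ with hN
  apply Multipliable.comp_nat_add (k := N)
  have hhalf : ∀ n : ℕ, ‖F z (n + N) - 1‖ ≤ 1 / 2 := by
    intro n
    refine le_trans (F_sub_one_bound z hz (n + N)) ?_
    rw [div_le_iff₀ (show (0:ℝ) < ((((n + N : ℕ)) : ℝ) + 1) ^ 2 by positivity)]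
    have hceil : 2 * C ≤ (N : ℝ) := Nat.le_ceil _
    have h3 : (N : ℝ) ≤ (((n + N : ℕ)) : ℝ) + 1 := by
      have h0 : (0:ℝ) ≤ (n:ℝ) := Nat.cast_nonneg n
      push_cast
      linarith
    have h4 : (1 : ℝ) ≤ (((n + N : ℕ)) : ℝ) + 1 := by
      have h0 : (0:ℝ) ≤ (((n + N : ℕ)) : ℝ) := Nat.cast_nonneg _
      linarith
    nlinarith
  have hbound : ∀ n : ℕ, ‖Complex.log (F z (n + N))‖ ≤ (3 / 2 * C) / ((n : ℝ) + 1) ^ 2 := by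
    intro n
    have h1 : F z (n + N) = 1 + (F z (n + N) - 1) := by ring
    have hmono : ((n : ℝ) + 1) ^ 2 ≤ ((((n + N : ℕ)) : ℝ) + 1) ^ 2 := by
      have h0 : (0:ℝ) ≤ (N:ℝ) := Nat.cast_nonneg N
      have h2 : ((n : ℝ) + 1) ≤ (((n + N : ℕ)) : ℝ) + 1 := by push_cast; linarith
      have h5 : (0:ℝ) ≤ (n:ℝ) + 1 := by positivity
      nlinarith
    calc ‖Complex.log (F z (n + N))‖
        = ‖Complex.log (1 + (F z (n + N) - 1))‖ := by rw [← h1]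
      _ ≤ 3 / 2 * ‖F z (n + N) - 1‖ := Complex.norm_log_one_add_half_le_self (hhalf n)
      _ ≤ 3 / 2 * (C / ((((n + N : ℕ)) : ℝ) + 1) ^ 2) := by
          have h5 := F_sub_one_bound z hz (n + N)
          linarith
      _ ≤ (3 / 2 * C) / ((n : ℝ) + 1) ^ 2 := by
          rw [mul_div_assoc]
          refine mul_le_mul_of_nonneg_left ?_ (by norm_num)
          exact div_le_div_of_nonneg_left hCnonneg (by positivity) hmono
  have hsumbase : Summable (fun n : ℕ => 1 / ((n : ℝ) + 1) ^ 2) := by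
    have h := Real.summable_one_div_nat_pow.mpr (by norm_num : 1 < 2)
    have h2 := (summable_nat_add_iff 1).mpr h
    refine h2.congr fun n => ?_
    push_cast; ring
  have hsumlog : Summable (fun n : ℕ => Complex.log (F z (n + N))) := by
    apply Summable.of_norm
    apply Summable.of_nonneg_of_le (fun n => norm_nonneg _) hbound
    refine ((hsumbase.mul_left (3 / 2 * C)).congr fun n => ?_)
    ring
  have hne : ∀ n : ℕ, F z (n + N) ≠ 0 := fun n => inv_ne_zero (f_ne z hz (n + N))
  exact Complex.multipliable_of_summable_log hsumlog

lemma euler_lim (w : ℂ) (hw : (Real.pi : ℂ) * w ≠ 0) :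
    Tendsto (fun n : ℕ => ∏ j ∈ range n, (1 - w ^ 2 / ((j : ℂ) + 1) ^ 2)) atTop
      (𝓝 (Complex.sin ((Real.pi : ℂ) * w) / ((Real.pi : ℂ) * w))) := by
  have h := (Complex.tendsto_euler_sin_prod w).div_const ((Real.pi : ℂ) * w)
  refine h.congr fun n => ?_
  exact mul_div_cancel_left₀ _ hw

lemma final_alg (X Y W p z i : ℂ) (hX : X ≠ 0) (hY : Y ≠ 0) (hW : W ≠ 0)
    (hp : p ≠ 0) (hz : z ≠ 0) (hi : i ≠ 0) :
    (X / (p * (i * z / 2))) / ((Y / (p * (z / 2))) * (2 * X * W / (p * (i * z))))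
      = p * z / 2 / (Y * W) := by
  have h1 : p * (i * z / 2) ≠ 0 :=
    mul_ne_zero hp (div_ne_zero (mul_ne_zero hi hz) two_ne_zero)
  have h2 : p * (z / 2) ≠ 0 := mul_ne_zero hp (div_ne_zero hz two_ne_zero)
  have h3 : p * (i * z) ≠ 0 := mul_ne_zero hp (mul_ne_zero hi hz)
  have hb : (Y / (p * (z / 2))) * (2 * X * W / (p * (i * z))) ≠ 0 :=
    mul_ne_zero (div_ne_zero hY h2)
      (div_ne_zero (by exact mul_ne_zero (mul_ne_zero two_ne_zero hX) hW) h3)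
  rw [div_eq_div_iff hb (mul_ne_zero hY hW)]
  rw [div_mul_eq_mul_div, div_mul_div_comm, mul_div_assoc, div_mul_eq_mul_div]
  rw [mul_div_assoc', ← mul_div_assoc, ← mul_div_assoc, div_div]
  rw [div_eq_div_iff (div_ne_zero h3 two_ne_zero)
    (by exact mul_ne_zero (mul_ne_zero h2 h3) two_ne_zero)]
  ring

lemma int_one_le {k : ℤ} (hk : k ≠ 0) : (1 : ℝ) ≤ ‖(k : ℂ)‖ := by
  rw [Complex.norm_intCast]
  exact_mod_cast Int.one_le_abs hk

lemma norm_int_cases (z : ℂ) (k : ℤ) (h : ‖z‖ = ‖(k : ℂ)‖) (hz0 : 0 < ‖z‖) : 1 ≤ ‖z‖ := by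
  rcases eq_or_ne k 0 with h0 | h0
  · rw [h0] at h
    simp only [Int.cast_zero, norm_zero] at h
    rw [h] at hz0
    exact absurd hz0 (lt_irrefl 0)
  · rw [h]; exact int_one_le h0

end ProdInvAux

open ProdInvAux Filter Finset Complex Topology

set_option maxHeartbeats 1000000 in
/-- For `0 < |z| < 1`,
`∏_{k≥1} (1 - (-1)^k z²/k²)^{-1} = (πz/2)/(sin(πz/2)·cosh(πz/2))`. -/
theorem prod_inv_eq (z : ℂ) (hz0 : 0 < ‖z‖) (hz : ‖z‖ < 1) :
    (∏' k : ℕ+, (1 - (-1 : ℂ) ^ (k : ℕ) * z ^ 2 / (k : ℂ) ^ 2)⁻¹) =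
      ((Real.pi : ℂ) * z / 2) /
        (Complex.sin ((Real.pi : ℂ) * z / 2) * Complex.cosh ((Real.pi : ℂ) * z / 2)) := by
  have hzne : z ≠ 0 := norm_pos_iff.mp hz0
  have hπ : (Real.pi : ℂ) ≠ 0 := Complex.ofReal_ne_zero.mpr Real.pi_ne_zero
  have hnI : ‖Complex.I * z‖ = ‖z‖ := by rw [norm_mul, Complex.norm_I, one_mul]
  -- nonvanishing of the relevant sines / cosh
  have hsinA : Complex.sin ((Real.pi : ℂ) * (z / 2)) ≠ 0 := by
    intro h
    rcases Complex.sin_eq_zero_iff.mp h with ⟨k, hk⟩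
    have hzk : z = 2 * (k : ℂ) := by
      have h2 : (Real.pi : ℂ) * z = (Real.pi : ℂ) * (2 * (k : ℂ)) := by linear_combination 2 * hk
      exact mul_left_cancel₀ hπ h2
    have h3 : ‖z / 2‖ = ‖(k : ℂ)‖ := by
      rw [hzk, norm_div, norm_mul, Complex.norm_ofNat]; ring
    have h4 := norm_int_cases (z / 2) k h3 (by rw [norm_div, Complex.norm_ofNat]; positivity)
    rw [norm_div, Complex.norm_ofNat] at h4
    linarith
  have hsinS : Complex.sin ((Real.pi : ℂ) * (Complex.I * z)) ≠ 0 := by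
    intro h
    rcases Complex.sin_eq_zero_iff.mp h with ⟨k, hk⟩
    have hzk : Complex.I * z = (k : ℂ) := by
      have h2 : (Real.pi : ℂ) * (Complex.I * z) = (Real.pi : ℂ) * (k : ℂ) := by
        linear_combination hk
      exact mul_left_cancel₀ hπ h2
    have h3 : ‖z‖ = ‖(k : ℂ)‖ := by rw [← hnI, hzk]
    have h4 := norm_int_cases z k h3 hz0
    linarith
  have hsinD : Complex.sin ((Real.pi : ℂ) * (Complex.I * z / 2)) ≠ 0 := by
    intro h
    rcases Complex.sin_eq_zero_iff.mp h with ⟨k, hk⟩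
    have hzk : Complex.I * z = 2 * (k : ℂ) := by
      have h2 : (Real.pi : ℂ) * (Complex.I * z) = (Real.pi : ℂ) * (2 * (k : ℂ)) := by
        linear_combination 2 * hk
      exact mul_left_cancel₀ hπ h2
    have h3 : ‖z / 2‖ = ‖(k : ℂ)‖ := by
      rw [norm_div, ← hnI, hzk, norm_mul, Complex.norm_ofNat]; ring
    have h4 := norm_int_cases (z / 2) k h3 (by rw [norm_div, Complex.norm_ofNat]; positivity)
    rw [norm_div, Complex.norm_ofNat] at h4
    linarith
  have hcosh : Complex.cosh ((Real.pi : ℂ) * z / 2) ≠ 0 := by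
    intro h
    rw [← Complex.cos_mul_I] at h
    rcases Complex.cos_eq_zero_iff.mp h with ⟨k, hk⟩
    have hzk : z * Complex.I = 2 * (k : ℂ) + 1 := by
      have h2 : (Real.pi : ℂ) * (z * Complex.I) = (Real.pi : ℂ) * (2 * (k : ℂ) + 1) := by
        linear_combination 2 * hk
      exact mul_left_cancel₀ hπ h2
    have h1 : (2 * k + 1 : ℤ) ≠ 0 := by omega
    have h2 := int_one_le h1
    have h3 : ((2 * k + 1 : ℤ) : ℂ) = 2 * (k : ℂ) + 1 := by push_cast; ring
    rw [h3, ← hzk, norm_mul, Complex.norm_I, mul_one] at h2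
    linarith
  -- limits of the three auxiliary partial products
  have hA := euler_lim (z / 2) (mul_ne_zero hπ (div_ne_zero hzne two_ne_zero))
  have hS := euler_lim (Complex.I * z) (mul_ne_zero hπ (mul_ne_zero Complex.I_ne_zero hzne))
  have hD := euler_lim (Complex.I * z / 2)
    (mul_ne_zero hπ (div_ne_zero (mul_ne_zero Complex.I_ne_zero hzne) two_ne_zero))
  have h2n : Tendsto (fun n : ℕ => 2 * n) atTop atTop :=
    tendsto_atTop_atTop.mpr fun b => ⟨b, fun a ha => by omega⟩
  have hS2 := hS.comp h2n
  set LA := Complex.sin ((Real.pi : ℂ) * (z / 2)) / ((Real.pi : ℂ) * (z / 2)) with hLA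
  set LS := Complex.sin ((Real.pi : ℂ) * (Complex.I * z)) / ((Real.pi : ℂ) * (Complex.I * z))
    with hLS
  set LD := Complex.sin ((Real.pi : ℂ) * (Complex.I * z / 2)) /
    ((Real.pi : ℂ) * (Complex.I * z / 2)) with hLD
  have hLAne : LA ≠ 0 := div_ne_zero hsinA (mul_ne_zero hπ (div_ne_zero hzne two_ne_zero))
  have hLSne : LS ≠ 0 := div_ne_zero hsinS (mul_ne_zero hπ (mul_ne_zero Complex.I_ne_zero hzne))
  -- identity for partial products of F
  have hident : ∀ n : ℕ, ∏ k ∈ range (2 * n), F z k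
      = (∏ m ∈ range n, d z m) / ((∏ m ∈ range n, a z m) * ∏ k ∈ range (2 * n), s z k) := by
    intro n
    have hfne : (∏ k ∈ range (2 * n), f z k) ≠ 0 :=
      Finset.prod_ne_zero_iff.mpr fun i _ => f_ne z hz i
    have hASne : ((∏ m ∈ range n, a z m) * ∏ k ∈ range (2 * n), s z k) ≠ 0 :=
      mul_ne_zero (Finset.prod_ne_zero_iff.mpr fun i _ => a_ne z hz i)
        (Finset.prod_ne_zero_iff.mpr fun i _ => s_ne z hz i)
    simp only [F]
    rw [Finset.prod_inv_distrib, eq_div_iff hASne, ← key z n, ← mul_assoc,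
      inv_mul_cancel₀ hfne, one_mul]
  -- limit of partial products of F along even indices
  have hlim : Tendsto (fun n : ℕ => ∏ k ∈ range (2 * n), F z k) atTop
      (𝓝 (LD / (LA * LS))) := by
    have h := hD.div (hA.mul hS2) (mul_ne_zero hLAne hLSne)
    refine h.congr fun n => ?_
    rw [hident n]
    rfl
  -- tprod value via multipliability
  have hmul := multipliable_F z hz
  have htend := (hmul.hasProd.tendsto_prod_nat).comp h2n
  have htprod : (∏' n : ℕ, F z n) = LD / (LA * LS) :=
    tendsto_nhds_unique htend hlim
  -- convert the PNat tprod
  have hconv : (∏' k : ℕ+, (1 - (-1 : ℂ) ^ (k : ℕ) * z ^ 2 / (k : ℂ) ^ 2)⁻¹)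
      = ∏' n : ℕ, F z n := by
    rw [← Equiv.tprod_eq Equiv.pnatEquivNat.symm
      (fun k : ℕ+ => (1 - (-1 : ℂ) ^ (k : ℕ) * z ^ 2 / (k : ℂ) ^ 2)⁻¹)]
    apply tprod_congr
    intro n
    have h1 : ((Equiv.pnatEquivNat.symm n : ℕ+) : ℕ) = n + 1 := by
      simp [Equiv.pnatEquivNat]
    have h2 : ((Equiv.pnatEquivNat.symm n : ℕ+) : ℂ) = (n : ℂ) + 1 := by
      have h3 : ((Equiv.pnatEquivNat.symm n : ℕ+) : ℂ)
          = (((Equiv.pnatEquivNat.symm n : ℕ+) : ℕ) : ℂ) := by norm_cast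
      rw [h3, h1]; push_cast; ring
    simp only [F, f, h1, h2]
    norm_cast
  -- final algebra
  rw [hconv, htprod]
  have hsin2 : Complex.sin ((Real.pi : ℂ) * (Complex.I * z))
      = 2 * Complex.sin ((Real.pi : ℂ) * (Complex.I * z / 2)) *
        Complex.cos ((Real.pi : ℂ) * (Complex.I * z / 2)) := by
    rw [← Complex.sin_two_mul]
    congr 1
    ring
  have hcos : Complex.cos ((Real.pi : ℂ) * (Complex.I * z / 2))
      = Complex.cosh ((Real.pi : ℂ) * z / 2) := by
    rw [← Complex.cos_mul_I]
    congr 1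
    ring
  rw [hLD, hLA, hLS, hsin2, hcos]
  have hsinA' : Complex.sin ((Real.pi : ℂ) * (z / 2)) = Complex.sin ((Real.pi : ℂ) * z / 2) := by
    congr 1; ring
  rw [hsinA']
  have hsA : Complex.sin ((Real.pi : ℂ) * z / 2) ≠ 0 := by rw [← hsinA']; exact hsinA
  generalize hX : Complex.sin ((Real.pi : ℂ) * (Complex.I * z / 2)) = X at hsinD ⊢
  generalize hY : Complex.sin ((Real.pi : ℂ) * z / 2) = Y at hsA ⊢
  generalize hW : Complex.cosh ((Real.pi : ℂ) * z / 2) = W at hcosh ⊢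
  exact final_alg X Y W _ z Complex.I hsinD hsA hcosh hπ hzne Complex.I_ne_zero
end

section
/- For every complex z with 0 < |z| < 1, ∏_{k≥1} (1 + (-1)^k z²/k²)(1 - (-1)^k z²/k²)^{-1} = tanh(πz/2) · cot(πz/2). -/
open Filter Finset Topology

noncomputable def s (z : ℂ) (i : ℕ) : ℂ := 1 - z ^ 2 / ((i : ℂ) + 1) ^ 2
noncomputable def sh (z : ℂ) (i : ℕ) : ℂ := 1 + z ^ 2 / ((i : ℂ) + 1) ^ 2
noncomputable def F (z : ℂ) (i : ℕ) : ℂ :=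
  (1 + (-1 : ℂ) ^ (i + 1) * z ^ 2 / ((i : ℂ) + 1) ^ 2) *
  (1 - (-1 : ℂ) ^ (i + 1) * z ^ 2 / ((i : ℂ) + 1) ^ 2)⁻¹

lemma norm_aux (z : ℂ) (i : ℕ) : ‖z ^ 2 / ((i : ℂ) + 1) ^ 2‖ ≤ ‖z‖ ^ 2 := by
  have h1 : ((i : ℂ) + 1) = ((i + 1 : ℕ) : ℂ) := by push_cast; ring
  rw [norm_div, norm_pow, norm_pow, h1, Complex.norm_natCast]
  have h0 : (1:ℝ) ≤ ((i+1:ℕ):ℝ) := by exact_mod_cast Nat.succ_le_succ (Nat.zero_le i)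
  have h2 : (1:ℝ) ≤ ((i+1:ℕ):ℝ)^2 := by nlinarith
  exact div_le_self (by positivity) h2

lemma one_add_ne {u : ℂ} (h : ‖u‖ < 1) : (1 : ℂ) + u ≠ 0 := by
  intro he
  have : u = -1 := by linear_combination he
  rw [this] at h; simp at h

lemma one_sub_ne {u : ℂ} (h : ‖u‖ < 1) : (1 : ℂ) - u ≠ 0 := by
  intro he
  have : u = 1 := by linear_combination -he
  rw [this] at h; simp at h

lemma sq_lt_one {z : ℂ} (hz : ‖z‖ < 1) : ‖z‖^2 < 1 := by
  nlinarith [norm_nonneg z]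

lemma s_ne {z : ℂ} (hz : ‖z‖ < 1) (i : ℕ) : s z i ≠ 0 :=
  one_sub_ne (lt_of_le_of_lt (norm_aux z i) (sq_lt_one hz))

lemma sh_ne {z : ℂ} (hz : ‖z‖ < 1) (i : ℕ) : sh z i ≠ 0 :=
  one_add_ne (lt_of_le_of_lt (norm_aux z i) (sq_lt_one hz))

lemma euler (w : ℂ) (hw : w ≠ 0) :
    Tendsto (fun n : ℕ => ∏ j ∈ range n, s w j) atTop
      (𝓝 (Complex.sin ((Real.pi : ℂ) * w) / ((Real.pi : ℂ) * w))) := by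
  have hpw : (Real.pi : ℂ) * w ≠ 0 :=
    mul_ne_zero (Complex.ofReal_ne_zero.mpr Real.pi_ne_zero) hw
  have h := (Complex.tendsto_euler_sin_prod w).const_mul (((Real.pi : ℂ) * w)⁻¹)
  simp only [inv_mul_cancel_left₀ hpw, inv_mul_eq_div] at h
  exact h

lemma euler_sinh (w : ℂ) (hw : w ≠ 0) :
    Tendsto (fun n : ℕ => ∏ j ∈ range n, sh w j) atTop
      (𝓝 (Complex.sinh ((Real.pi : ℂ) * w) / ((Real.pi : ℂ) * w))) := by
  have h := euler (Complex.I * w) (by simp [hw, Complex.I_ne_zero])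
  have h2 : ∀ j : ℕ, s (Complex.I * w) j = sh w j := by
    intro j
    simp only [s, sh, mul_pow, Complex.I_sq]
    ring
  have h3 : Complex.sin ((Real.pi : ℂ) * (Complex.I * w)) = Complex.sinh ((Real.pi : ℂ) * w) * Complex.I := by
    rw [show (Real.pi : ℂ) * (Complex.I * w) = ((Real.pi : ℂ) * w) * Complex.I by ring,
      Complex.sin_mul_I]
  simp only [h2, h3] at h
  have h4 : Complex.sinh ((Real.pi : ℂ) * w) * Complex.I / ((Real.pi : ℂ) * (Complex.I * w)) =
      Complex.sinh ((Real.pi : ℂ) * w) / ((Real.pi : ℂ) * w) := by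
    rw [show (Real.pi : ℂ) * (Complex.I * w) = ((Real.pi : ℂ) * w) * Complex.I by ring,
      mul_div_mul_right _ _ Complex.I_ne_zero]
  rwa [h4] at h

lemma F_even (z : ℂ) (n : ℕ) : F z (2 * n) = s z (2 * n) / sh z (2 * n) := by
  have h : (-1 : ℂ) ^ (2 * n + 1) = -1 := by
    rw [pow_succ, pow_mul]; norm_num
  simp only [F, s, sh, h, div_eq_mul_inv]
  ring_nf

lemma F_odd (z : ℂ) (n : ℕ) : F z (2 * n + 1) = sh z (2 * n + 1) / s z (2 * n + 1) := by
  have h : (-1 : ℂ) ^ (2 * n + 1 + 1) = 1 := by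
    rw [pow_succ, pow_succ, pow_mul]; norm_num
  simp only [F, s, sh, h, div_eq_mul_inv]
  ring_nf

lemma alg (A B S T a b c d : ℂ) (hB : B ≠ 0) (hT : T ≠ 0) (hb : b ≠ 0) (hc : c ≠ 0)
    (hd : d ≠ 0) :
    (A ^ 2 * S) / (B ^ 2 * T) * (a / b) * (d / c) =
      ((A * d) ^ 2 * (S * a * c)) / ((B * c) ^ 2 * (T * b * d)) := by
  rw [div_mul_div_comm, div_mul_div_comm, div_eq_div_iff (by simp [hB, hT, hb, hc]) (by simp [hB, hT, hb, hc, hd])]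
  ring

lemma rel1 (z : ℂ) (n : ℕ) : sh (z / 2) n = sh z (2 * n + 1) := by
  have hn : ((n : ℂ) + 1) ≠ 0 := Nat.cast_add_one_ne_zero n
  have h2 : (2 * (n : ℂ) + 1 + 1) ≠ 0 := by
    intro h; apply hn; linear_combination h / 2
  simp only [sh]
  push_cast
  field_simp
  ring

lemma rel2 (z : ℂ) (n : ℕ) : s (z / 2) n = s z (2 * n + 1) := by
  have hn : ((n : ℂ) + 1) ≠ 0 := Nat.cast_add_one_ne_zero n
  have h2 : (2 * (n : ℂ) + 1 + 1) ≠ 0 := by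
    intro h; apply hn; linear_combination h / 2
  simp only [s]
  push_cast
  field_simp
  ring

lemma key {z : ℂ} (hz : ‖z‖ < 1) (n : ℕ) :
    ∏ i ∈ range (2 * n), F z i =
      ((∏ i ∈ range n, sh (z / 2) i) ^ 2 * ∏ i ∈ range (2 * n), s z i) /
        ((∏ i ∈ range n, s (z / 2) i) ^ 2 * ∏ i ∈ range (2 * n), sh z i) := by
  have hz2 : ‖z / 2‖ < 1 := by
    rw [norm_div]
    have h2 : ‖(2:ℂ)‖ = 2 := by norm_num
    rw [h2]; linarith
  induction n with
  | zero => simp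
  | succ n ih =>
    have e1 : 2 * (n + 1) = 2 * n + 1 + 1 := by ring
    rw [e1]
    simp only [prod_range_succ]
    rw [ih, F_even, F_odd, rel1, rel2]
    exact alg _ _ _ _ _ _ _ _
      (prod_ne_zero_iff.mpr fun i _ => s_ne hz2 i)
      (prod_ne_zero_iff.mpr fun i _ => sh_ne hz i)
      (sh_ne hz _) (s_ne hz _) (sh_ne hz _)

lemma sin_ne {z : ℂ} (hz0 : z ≠ 0) (hz : ‖z‖ < 1) :
    Complex.sin ((Real.pi : ℂ) * (z / 2)) ≠ 0 := by
  intro h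
  rw [Complex.sin_eq_zero_iff] at h
  obtain ⟨k, hk⟩ := h
  have hπ : (Real.pi : ℂ) ≠ 0 := Complex.ofReal_ne_zero.mpr Real.pi_ne_zero
  have hzk : z = 2 * (k : ℂ) := by
    apply mul_left_cancel₀ hπ
    linear_combination 2 * hk
  rcases eq_or_ne k 0 with h0 | h0
  · exact hz0 (by simp [hzk, h0])
  · have h1 : (1 : ℝ) ≤ |(k : ℝ)| := by exact_mod_cast Int.one_le_abs h0
    have h2 : ‖z‖ = 2 * |(k : ℝ)| := by
      rw [hzk, norm_mul]
      simp [Complex.norm_intCast]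
    rw [h2] at hz; linarith

lemma sinh_ne {z : ℂ} (hz0 : z ≠ 0) (hz : ‖z‖ < 1) :
    Complex.sinh ((Real.pi : ℂ) * (z / 2)) ≠ 0 := by
  intro h
  have hs : Complex.sin ((Real.pi : ℂ) * (z / 2) * Complex.I) = 0 := by
    rw [Complex.sin_mul_I, h, zero_mul]
  rw [Complex.sin_eq_zero_iff] at hs
  obtain ⟨k, hk⟩ := hs
  have hπ : (Real.pi : ℂ) ≠ 0 := Complex.ofReal_ne_zero.mpr Real.pi_ne_zero
  have hzk : z * Complex.I = 2 * (k : ℂ) := by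
    apply mul_left_cancel₀ hπ
    linear_combination 2 * hk
  rcases eq_or_ne k 0 with h0 | h0
  · apply hz0
    have : z * Complex.I = 0 := by simp [hzk, h0]
    simpa [Complex.I_ne_zero] using this
  · have h1 : (1 : ℝ) ≤ |(k : ℝ)| := by exact_mod_cast Int.one_le_abs h0
    have h2 : ‖z‖ = 2 * |(k : ℝ)| := by
      have : ‖z * Complex.I‖ = ‖z‖ := by simp
      rw [← this, hzk, norm_mul]
      simp [Complex.norm_intCast]
    rw [h2] at hz; linarith

lemma cosh_ne {z : ℂ} (hz : ‖z‖ < 1) :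
    Complex.cosh ((Real.pi : ℂ) * (z / 2)) ≠ 0 := by
  intro h
  have hs : Complex.cos ((Real.pi : ℂ) * (z / 2) * Complex.I) = 0 := by
    rw [Complex.cos_mul_I, h]
  rw [Complex.cos_eq_zero_iff] at hs
  obtain ⟨k, hk⟩ := hs
  have hπ : (Real.pi : ℂ) ≠ 0 := Complex.ofReal_ne_zero.mpr Real.pi_ne_zero
  have hzk : z * Complex.I = 2 * (k : ℂ) + 1 := by
    apply mul_left_cancel₀ hπ
    linear_combination 2 * hk
  have h1 : (1 : ℝ) ≤ |((2 * k + 1 : ℤ) : ℝ)| := by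
    exact_mod_cast Int.one_le_abs (by omega)
  have h2 : ‖z‖ = |((2 * k + 1 : ℤ) : ℝ)| := by
    have hI : ‖z * Complex.I‖ = ‖z‖ := by simp
    have : z * Complex.I = ((2 * k + 1 : ℤ) : ℂ) := by rw [hzk]; push_cast; ring
    rw [← hI, this, Complex.norm_intCast]
  rw [h2] at hz; linarith

lemma norm_e (z : ℂ) (m i : ℕ) :
    ‖(-1 : ℂ) ^ m * z ^ 2 / ((i : ℂ) + 1) ^ 2‖ = ‖z‖ ^ 2 * (1 / ((i : ℝ) + 1) ^ 2) := by
  rw [mul_div_assoc, norm_mul, norm_div, norm_pow, norm_pow, norm_pow, norm_neg, norm_one,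
    one_pow, one_mul, show ((i : ℂ) + 1) = ((i + 1 : ℕ) : ℂ) by push_cast; ring,
    Complex.norm_natCast]
  push_cast
  ring

lemma inv_frac_le_one (i : ℕ) : 1 / ((i : ℝ) + 1) ^ 2 ≤ 1 := by
  rw [div_le_one (by positivity)]
  nlinarith [Nat.cast_nonneg (α := ℝ) i]

lemma F_ne {z : ℂ} (hz : ‖z‖ < 1) (n : ℕ) : F z n ≠ 0 := by
  have h : ‖(-1 : ℂ) ^ (n + 1) * z ^ 2 / ((n : ℂ) + 1) ^ 2‖ < 1 := by
    rw [norm_e]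
    nlinarith [inv_frac_le_one n, sq_lt_one hz, sq_nonneg ‖z‖,
      one_div_pos.mpr (by positivity : (0:ℝ) < ((n:ℝ)+1)^2)]
  exact mul_ne_zero (one_add_ne h) (inv_ne_zero (one_sub_ne h))

lemma quot_sub_one {e : ℂ} (h : (1 : ℂ) - e ≠ 0) :
    (1 + e) * (1 - e)⁻¹ - 1 = 2 * e * (1 - e)⁻¹ := by
  field_simp
  ring

lemma Fsub_bound {z : ℂ} (hz : ‖z‖ < 1) (n : ℕ) :
    ‖F z n - 1‖ ≤ (2 / (1 - ‖z‖ ^ 2)) * (‖z‖ ^ 2 * (1 / ((n : ℝ) + 1) ^ 2)) := by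
  have hnorm := norm_e z (n + 1) n
  have hle : ‖(-1 : ℂ) ^ (n + 1) * z ^ 2 / ((n : ℂ) + 1) ^ 2‖ ≤ ‖z‖ ^ 2 := by
    rw [hnorm]
    nlinarith [inv_frac_le_one n, sq_nonneg ‖z‖, one_div_pos.mpr (by positivity : (0:ℝ) < ((n:ℝ)+1)^2)]
  have hlt : ‖(-1 : ℂ) ^ (n + 1) * z ^ 2 / ((n : ℂ) + 1) ^ 2‖ < 1 :=
    lt_of_le_of_lt hle (sq_lt_one hz)
  have hsub : (1 : ℂ) - (-1 : ℂ) ^ (n + 1) * z ^ 2 / ((n : ℂ) + 1) ^ 2 ≠ 0 := one_sub_ne hlt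
  have hfe : F z n - 1 =
      2 * ((-1 : ℂ) ^ (n + 1) * z ^ 2 / ((n : ℂ) + 1) ^ 2) *
        (1 - (-1 : ℂ) ^ (n + 1) * z ^ 2 / ((n : ℂ) + 1) ^ 2)⁻¹ := by
    simp only [F]
    exact quot_sub_one hsub
  have hpos : 0 < 1 - ‖z‖ ^ 2 := by linarith [sq_lt_one hz]
  have hge : 1 - ‖z‖ ^ 2 ≤ ‖(1 : ℂ) - (-1 : ℂ) ^ (n + 1) * z ^ 2 / ((n : ℂ) + 1) ^ 2‖ := by
    have h1 := norm_sub_norm_le (1 : ℂ) ((-1 : ℂ) ^ (n + 1) * z ^ 2 / ((n : ℂ) + 1) ^ 2)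
    simp only [norm_one] at h1
    linarith
  rw [hfe, norm_mul, norm_mul, norm_inv]
  have h2 : ‖(2 : ℂ)‖ = 2 := by norm_num
  rw [h2, hnorm]
  have hinv : ‖(1 : ℂ) - (-1 : ℂ) ^ (n + 1) * z ^ 2 / ((n : ℂ) + 1) ^ 2‖⁻¹ ≤ (1 - ‖z‖ ^ 2)⁻¹ := by
    apply inv_anti₀ hpos hge
  calc 2 * (‖z‖ ^ 2 * (1 / ((n : ℝ) + 1) ^ 2)) *
        ‖(1 : ℂ) - (-1 : ℂ) ^ (n + 1) * z ^ 2 / ((n : ℂ) + 1) ^ 2‖⁻¹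
      ≤ 2 * (‖z‖ ^ 2 * (1 / ((n : ℝ) + 1) ^ 2)) * (1 - ‖z‖ ^ 2)⁻¹ := by
        apply mul_le_mul_of_nonneg_left hinv (by positivity)
    _ = (2 / (1 - ‖z‖ ^ 2)) * (‖z‖ ^ 2 * (1 / ((n : ℝ) + 1) ^ 2)) := by ring

lemma log_bound {z : ℂ} (n : ℕ) (hsmall : ‖F z n - 1‖ ≤ 1 / 2) :
    ‖Complex.log (F z n)‖ ≤ (3 / 2) * ‖F z n - 1‖ := by
  have h := Complex.norm_log_one_add_half_le_self hsmall
  simpa using h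

lemma log_summable {z : ℂ} (hz : ‖z‖ < 1) :
    Summable fun n : ℕ => Complex.log (F z n) := by
  have hpos : 0 < 1 - ‖z‖ ^ 2 := by linarith [sq_lt_one hz]
  have S1 : Summable (fun n : ℕ => 1 / ((n : ℝ) + 1) ^ 2) := by
    have h1 : Summable (fun n : ℕ => 1 / (n : ℝ) ^ 2) :=
      Real.summable_one_div_nat_pow.mpr (by norm_num)
    have h2 := (summable_nat_add_iff 1).mpr h1
    apply h2.congr
    intro n
    push_cast
    ring
  have S2 : Summable (fun n : ℕ => (3 / (1 - ‖z‖ ^ 2)) * (‖z‖ ^ 2 * (1 / ((n : ℝ) + 1) ^ 2))) := by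
    have := S1.mul_left ((3 / (1 - ‖z‖ ^ 2)) * ‖z‖ ^ 2)
    apply this.congr
    intro n
    ring
  refine Summable.of_norm_bounded_eventually S2 ?_
  rw [Nat.cofinite_eq_atTop]
  have h0 : Tendsto (fun n : ℕ => 1 / ((n : ℝ) + 1)) atTop (𝓝 0) :=
    tendsto_one_div_add_atTop_nhds_zero_nat
  have htend : Tendsto (fun n : ℕ => (2 / (1 - ‖z‖ ^ 2)) * (‖z‖ ^ 2 * (1 / ((n : ℝ) + 1) ^ 2)))
      atTop (𝓝 0) := by
    have h1 := ((h0.pow 2).const_mul (‖z‖ ^ 2)).const_mul (2 / (1 - ‖z‖ ^ 2))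
    simpa [div_pow] using h1
  have hev : ∀ᶠ n : ℕ in atTop, ‖F z n - 1‖ ≤ 1 / 2 := by
    filter_upwards [htend.eventually_lt_const (by norm_num : (0 : ℝ) < 1 / 2)] with n hn
    exact (Fsub_bound hz n).trans hn.le
  filter_upwards [hev] with n hn
  calc ‖Complex.log (F z n)‖ ≤ (3 / 2) * ‖F z n - 1‖ := log_bound n hn
    _ ≤ (3 / 2) * ((2 / (1 - ‖z‖ ^ 2)) * (‖z‖ ^ 2 * (1 / ((n : ℝ) + 1) ^ 2))) := by
        apply mul_le_mul_of_nonneg_left (Fsub_bound hz n) (by norm_num)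
    _ = (3 / (1 - ‖z‖ ^ 2)) * (‖z‖ ^ 2 * (1 / ((n : ℝ) + 1) ^ 2)) := by ring

lemma F_multipliable {z : ℂ} (hz : ‖z‖ < 1) : Multipliable (F z) :=
  Complex.multipliable_of_summable_log (log_summable hz)

lemma final_alg (a S C Sh Ch : ℂ) (haa : a ≠ 0) (hS : S ≠ 0) (hCh : Ch ≠ 0) (hSh : Sh ≠ 0) :
    ((Sh / a) ^ 2 * (2 * S * C / (2 * a))) / ((S / a) ^ 2 * (2 * Sh * Ch / (2 * a))) =
      Sh / Ch * (C / S) := by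
  rw [div_pow, div_pow, div_mul_div_comm, div_mul_div_comm, div_div_div_comm,
    div_self (show a ^ 2 * (2 * a) ≠ 0 by simp [haa]), div_one, div_mul_div_comm,
    div_eq_div_iff (by simp [hS, hCh, hSh]) (by simp [hS, hCh])]
  ring

set_option maxHeartbeats 1000000 in
/-- For `0 < |z| < 1`,
`∏_{k≥1} (1 + (-1)^k z²/k²)(1 - (-1)^k z²/k²)^{-1} = tanh(πz/2)·cot(πz/2)`. -/
theorem prod_eq_tanh_cot (z : ℂ) (hz0 : 0 < ‖z‖) (hz : ‖z‖ < 1) :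
    (∏' k : ℕ+, ((1 + (-1 : ℂ) ^ (k : ℕ) * z ^ 2 / (k : ℂ) ^ 2) *
        (1 - (-1 : ℂ) ^ (k : ℕ) * z ^ 2 / (k : ℂ) ^ 2)⁻¹)) =
      Complex.tanh ((Real.pi : ℂ) * z / 2) * Complex.cot ((Real.pi : ℂ) * z / 2) := by
  have hzne : z ≠ 0 := norm_pos_iff.mp hz0
  have hz2ne : z / 2 ≠ 0 := div_ne_zero hzne two_ne_zero
  have hz2 : ‖z / 2‖ < 1 := by
    rw [norm_div, show ‖(2 : ℂ)‖ = 2 by norm_num]; linarith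
  have hπ : (Real.pi : ℂ) ≠ 0 := Complex.ofReal_ne_zero.mpr Real.pi_ne_zero
  have hre : (∏' k : ℕ+, ((1 + (-1 : ℂ) ^ (k : ℕ) * z ^ 2 / (k : ℂ) ^ 2) *
      (1 - (-1 : ℂ) ^ (k : ℕ) * z ^ 2 / (k : ℂ) ^ 2)⁻¹)) = ∏' n : ℕ, F z n := by
    rw [← Equiv.tprod_eq Equiv.pnatEquivNat.symm
      (fun k : ℕ+ => ((1 + (-1 : ℂ) ^ (k : ℕ) * z ^ 2 / (k : ℂ) ^ 2) *
          (1 - (-1 : ℂ) ^ (k : ℕ) * z ^ 2 / (k : ℂ) ^ 2)⁻¹))]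
    apply tprod_congr
    intro n
    simp only [Equiv.pnatEquivNat, Equiv.symm, Equiv.coe_fn_mk, F]
    norm_num [Nat.succPNat]
  rw [hre]
  have ht2 : Tendsto (fun n : ℕ => 2 * n) atTop atTop :=
    tendsto_atTop_mono (fun n : ℕ => Nat.le_mul_of_pos_left n (by norm_num)) tendsto_id
  have hS2 : Tendsto (fun n : ℕ => ∏ i ∈ range (2 * n), s z i) atTop
      (𝓝 (Complex.sin ((Real.pi : ℂ) * z) / ((Real.pi : ℂ) * z))) := (euler z hzne).comp ht2
  have hSh2 : Tendsto (fun n : ℕ => ∏ i ∈ range (2 * n), sh z i) atTop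
      (𝓝 (Complex.sinh ((Real.pi : ℂ) * z) / ((Real.pi : ℂ) * z))) :=
    (euler_sinh z hzne).comp ht2
  have hsin := sin_ne hzne hz
  have hsinh := sinh_ne hzne hz
  have hcosh := cosh_ne hz
  have hsinh2 : Complex.sinh ((Real.pi : ℂ) * z) ≠ 0 := by
    rw [show (Real.pi : ℂ) * z = 2 * ((Real.pi : ℂ) * (z / 2)) by ring, Complex.sinh_two_mul]
    exact mul_ne_zero (mul_ne_zero two_ne_zero hsinh) hcosh
  have hden : ((Complex.sin ((Real.pi : ℂ) * (z / 2)) / ((Real.pi : ℂ) * (z / 2))) ^ 2 *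
      (Complex.sinh ((Real.pi : ℂ) * z) / ((Real.pi : ℂ) * z))) ≠ 0 :=
    mul_ne_zero (pow_ne_zero _ (div_ne_zero hsin (mul_ne_zero hπ hz2ne)))
      (div_ne_zero hsinh2 (mul_ne_zero hπ hzne))
  have hlim : Tendsto (fun n : ℕ => ∏ i ∈ range (2 * n), F z i) atTop
      (𝓝 (((Complex.sinh ((Real.pi : ℂ) * (z / 2)) / ((Real.pi : ℂ) * (z / 2))) ^ 2 *
            (Complex.sin ((Real.pi : ℂ) * z) / ((Real.pi : ℂ) * z))) /
          ((Complex.sin ((Real.pi : ℂ) * (z / 2)) / ((Real.pi : ℂ) * (z / 2))) ^ 2 *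
            (Complex.sinh ((Real.pi : ℂ) * z) / ((Real.pi : ℂ) * z))))) := by
    have h := Tendsto.div ((((euler_sinh (z / 2) hz2ne)).pow 2).mul hS2)
      ((((euler (z / 2) hz2ne)).pow 2).mul hSh2) hden
    exact h.congr fun n => (key hz n).symm
  have hP : Tendsto (fun n : ℕ => ∏ i ∈ range n, F z i) atTop (𝓝 (∏' n, F z n)) :=
    (F_multipliable hz).hasProd.tendsto_prod_nat
  have hP2 : Tendsto (fun n : ℕ => ∏ i ∈ range (2 * n), F z i) atTop (𝓝 (∏' n, F z n)) :=
    hP.comp ht2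
  rw [tendsto_nhds_unique hP2 hlim]
  rw [show (Real.pi : ℂ) * z / 2 = (Real.pi : ℂ) * (z / 2) by ring]
  rw [show (Real.pi : ℂ) * z = 2 * ((Real.pi : ℂ) * (z / 2)) by ring]
  rw [Complex.sin_two_mul, Complex.sinh_two_mul, Complex.tanh_eq_sinh_div_cosh,
    Complex.cot_eq_cos_div_sin]
  exact final_alg _ _ _ _ _ (mul_ne_zero hπ hz2ne) hsin hcosh hsinh
end
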